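/- Duality bound (intermediate step in the proof of the Aubin–Nitsche Lemma): Let V_h ⊆ V be a closed subspace, let u ∈ V satisfy a(u,v) = l(v) for all v ∈ V, and let u_h ∈ V_h satisfy a(u_h, v_h) = l(v_h) for all v_h ∈ V_h. Let w ∈ W and let v_w ∈ V satisfy the dual problem a(φ, v_w) = ⟨w, ι(φ)⟩_W for all φ ∈ V. Then for every v_h ∈ V_h one has |⟨w, ι(u) − ι(u_h)⟩_W| ≤ γ ‖u − u_h‖_V ‖v_w − v_h‖_V. -/

import Mathlib

theorem LinearMap.galerkin_orthogonality {R M N : Type*} [CommRing R] [AddCommGroup M]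
    [Module R M] [AddCommGroup N] [Module R N] (a : M →ₗ[R] M →ₗ[R] N) {S : Set M}
    {l : M → N} {u uh : M} (hu : ∀ v ∈ S, a u v = l v) (huh : ∀ v ∈ S, a uh v = l v) :
    ∀ v ∈ S, a (u - uh) v = 0 := by
  intro v hv
  rw [map_sub, LinearMap.sub_apply, hu v hv, huh v hv, sub_self]

theorem aubin_nitsche_duality_bound_general
    {V : Type*} [NormedAddCommGroup V] [InnerProductSpace ℝ V]
    (a : V →ₗ[ℝ] V →ₗ[ℝ] ℝ) (l : V →L[ℝ] ℝ)
    (γ : ℝ)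
    (ha_cont : ∀ u v : V, |a u v| ≤ γ * ‖u‖ * ‖v‖)
    {W : Type*} [NormedAddCommGroup W] [InnerProductSpace ℝ W]
    (ι : V →L[ℝ] W)
    (Vh : Submodule ℝ V)
    (u : V) (hu : ∀ v : V, a u v = l v)
    (uh : V) (huh_sol : ∀ vh ∈ Vh, a uh vh = l vh)
    (w : W) (vw : V) (hvw : ∀ φ : V, a φ vw = (inner ℝ w (ι φ) : ℝ)) :
    ∀ vh ∈ Vh, |(inner ℝ w (ι u - ι uh) : ℝ)| ≤ γ * ‖u - uh‖ * ‖vw - vh‖ := by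
  intro vh hvh
  have horth := a.galerkin_orthogonality (fun v _ => hu v) huh_sol vh hvh
  calc |(inner ℝ w (ι u - ι uh) : ℝ)| = |a (u - uh) vw| := by rw [← map_sub, hvw]
    _ = |a (u - uh) (vw - vh)| := by rw [map_sub (a (u - uh)), horth, sub_zero]
    _ ≤ γ * ‖u - uh‖ * ‖vw - vh‖ := ha_cont _ _

theorem aubin_nitsche_duality_bound
    {V : Type*} [NormedAddCommGroup V] [InnerProductSpace ℝ V] [CompleteSpace V]
    (a : V →ₗ[ℝ] V →ₗ[ℝ] ℝ) (l : V →L[ℝ] ℝ)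
    (γ α : ℝ) (hγ : 0 < γ) (hα : 0 < α)
    (ha_symm : ∀ u v : V, a u v = a v u)
    (ha_cont : ∀ u v : V, |a u v| ≤ γ * ‖u‖ * ‖v‖)
    (ha_coer : ∀ u : V, α * ‖u‖ ^ 2 ≤ a u u)
    {W : Type*} [NormedAddCommGroup W] [InnerProductSpace ℝ W] [CompleteSpace W]
    (ι : V →L[ℝ] W) (hι : Function.Injective ι)
    (Vh : Submodule ℝ V) (hVh : IsClosed (Vh : Set V))
    (u : V) (hu : ∀ v : V, a u v = l v)
    (uh : V) (huh : uh ∈ Vh) (huh_sol : ∀ vh ∈ Vh, a uh vh = l vh)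
    (w : W) (vw : V) (hvw : ∀ φ : V, a φ vw = (inner ℝ w (ι φ) : ℝ)) :
    ∀ vh ∈ Vh, |(inner ℝ w (ι u - ι uh) : ℝ)| ≤ γ * ‖u - uh‖ * ‖vw - vh‖ :=
  aubin_nitsche_duality_bound_general a l γ ha_cont ι Vh u hu uh huh_sol w vw hvw
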